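/- arXiv:2104.02626 — 2 statements merged into one kernel-verified Lean document; each statement's English description precedes it below -/
import Mathlib

section
/- Let λ, k_d > 0, k_ad = λ k_d, and define S(Φ, Γ) = k_ad (Φ/Φ∞)(1 - Γ/Γ∞) - k_d (Γ/Γ∞) for Φ ∈ (0, Φ∞), Γ ∈ (0, Γ∞). With f and g the dilute bulk and Langmuir surface free energies (with λ = exp((μ_b - μ_s)/(R T))), one has (g'(Γ) - f'(Φ)) · S(Φ, Γ) ≤ 0 for all such Φ, Γ. -/
/-!
Both chemical potentials are explicit: `f'(Φ) = μ_b + RT log x` and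
`g'(Γ) = μ_s + RT (log y - log (1 - y))` with `x = Φ/Φ∞`, `y = Γ/Γ∞`. Since
`λ = exp ((μ_b - μ_s)/(RT))`, setting `A = λ x (1 - y)` gives `g' - f' = RT (log y - log A)`
and `S = k_d (A - y)`, so the product is `RT k_d (log y - log A)(A - y) ≤ 0` because `log`
is monotone.
-/

open Real

lemma log_sub_log_mul_sub_nonpos {a b : ℝ} (ha : 0 < a) (hb : 0 < b) :
    (log b - log a) * (a - b) ≤ 0 := by
  rcases le_total a b with hab | hba
  · exact mul_nonpos_of_nonneg_of_nonpos (sub_nonneg.mpr (log_le_log ha hab)) (by linarith)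
  · exact mul_nonpos_of_nonpos_of_nonneg (sub_nonpos.mpr (log_le_log hb hba)) (by linarith)

lemma hasDerivAt_div_mul_log_div {c x : ℝ} (hx : x / c ≠ 0) :
    HasDerivAt (fun t => t / c * log (t / c)) ((log (x / c) + 1) * (1 / c)) x :=
  (hasDerivAt_mul_log hx).comp (h := fun t => t / c) x ((hasDerivAt_id' x).div_const c)

lemma hasDerivAt_one_sub_div_mul_log {c x : ℝ} (hx : 1 - x / c ≠ 0) :
    HasDerivAt (fun t => (1 - t / c) * log (1 - t / c))
      ((log (1 - x / c) + 1) * -(1 / c)) x :=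
  (hasDerivAt_mul_log hx).comp (h := fun t => 1 - t / c) x
    (((hasDerivAt_id' x).div_const c).const_sub 1)

lemma hasDerivAt_dilute_free_energy (μ κ : ℝ) {c x : ℝ} (hc : c ≠ 0) (hx : x ≠ 0) :
    HasDerivAt (fun t => μ * t + κ * c * (t / c * log (t / c) - t / c))
      (μ + κ * log (x / c)) x := by
  have h := ((hasDerivAt_id' x).const_mul μ).add
    (((hasDerivAt_div_mul_log_div (div_ne_zero hx hc)).sub
      ((hasDerivAt_id' x).div_const c)).const_mul (κ * c))
  refine h.congr_deriv ?_
  field_simp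
  ring

lemma hasDerivAt_langmuir_free_energy (γ μ κ : ℝ) {c x : ℝ} (hc : c ≠ 0) (hx : x ≠ 0)
    (hxc : x ≠ c) :
    HasDerivAt (fun t => γ + μ * t + κ * c *
        (t / c * log (t / c) + (1 - t / c) * log (1 - t / c)))
      (μ + κ * (log (x / c) - log (1 - x / c))) x := by
  have hxc' : 1 - x / c ≠ 0 := by
    rw [sub_ne_zero, ne_comm, Ne, div_eq_one_iff_eq hc]
    exact hxc
  have h := (((hasDerivAt_id' x).const_mul μ).const_add γ).add
    (((hasDerivAt_div_mul_log_div (div_ne_zero hx hc)).add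
      (hasDerivAt_one_sub_div_mul_log hxc')).const_mul (κ * c))
  refine h.congr_deriv ?_
  field_simp
  ring

lemma langmuir_potential_difference_mul_rate_nonpos {μb μs κ k x y : ℝ} (hκ : 0 < κ)
    (hk : 0 < k) (hx : 0 < x) (hy₀ : 0 < y) (hy₁ : y < 1) :
    (μs + κ * (log y - log (1 - y)) - (μb + κ * log x)) *
      (exp ((μb - μs) / κ) * k * x * (1 - y) - k * y) ≤ 0 := by
  set A := exp ((μb - μs) / κ) * x * (1 - y) with hA
  have hA₀ : 0 < A := by positivity
  have hlogA : log A = (μb - μs) / κ + log x + log (1 - y) := by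
    rw [hA, log_mul (by positivity) (by linarith), log_mul (by positivity) hx.ne', log_exp]
  have hpot : μs + κ * (log y - log (1 - y)) - (μb + κ * log x) = κ * (log y - log A) := by
    rw [hlogA]
    field_simp
    ring
  have hrate : exp ((μb - μs) / κ) * k * x * (1 - y) - k * y = k * (A - y) := by
    rw [hA]
    ring
  rw [hpot, hrate, mul_mul_mul_comm]
  exact mul_nonpos_of_nonneg_of_nonpos (by positivity) (log_sub_log_mul_sub_nonpos hA₀ hy₀)

theorem statement5_general (μb μs γ0 R T Φinf Γinf kd lam kad : ℝ)
    (hR : 0 < R) (hT : 0 < T) (hΦinf : 0 < Φinf) (hΓinf : 0 < Γinf)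
    (hkd : 0 < kd)
    (hlameq : lam = Real.exp ((μb - μs) / (R * T)))
    (hkad : kad = lam * kd)
    (f g : ℝ → ℝ)
    (hf : ∀ Φ, f Φ = μb * Φ + R * T * Φinf * ((Φ / Φinf) * Real.log (Φ / Φinf) - Φ / Φinf))
    (hg : ∀ Γ, g Γ = γ0 + μs * Γ + R * T * Γinf *
      ((Γ / Γinf) * Real.log (Γ / Γinf) + (1 - Γ / Γinf) * Real.log (1 - Γ / Γinf)))
    (S : ℝ → ℝ → ℝ)
    (hS : ∀ Φ Γ, S Φ Γ = kad * (Φ / Φinf) * (1 - Γ / Γinf) - kd * (Γ / Γinf)) :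
    ∀ Φ ∈ Set.Ioo (0 : ℝ) Φinf, ∀ Γ ∈ Set.Ioo (0 : ℝ) Γinf,
      (deriv g Γ - deriv f Φ) * S Φ Γ ≤ 0 := by
  rintro Φ ⟨hΦ₀, -⟩ Γ ⟨hΓ₀, hΓ₁⟩
  have hf' : deriv f Φ = μb + R * T * log (Φ / Φinf) := by
    rw [funext hf]
    exact (hasDerivAt_dilute_free_energy μb (R * T) hΦinf.ne' hΦ₀.ne').deriv
  have hg' : deriv g Γ = μs + R * T * (log (Γ / Γinf) - log (1 - Γ / Γinf)) := by
    rw [funext hg]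
    exact (hasDerivAt_langmuir_free_energy γ0 μs (R * T) hΓinf.ne' hΓ₀.ne' hΓ₁.ne).deriv
  rw [hf', hg', hS, hkad, hlameq]
  exact langmuir_potential_difference_mul_rate_nonpos (mul_pos hR hT) hkd
    (div_pos hΦ₀ hΦinf) (div_pos hΓ₀ hΓinf) ((div_lt_one hΓinf).mpr hΓ₁)

theorem statement5 (μb μs γ0 R T Φinf Γinf kd lam kad : ℝ)
    (hR : 0 < R) (hT : 0 < T) (hΦinf : 0 < Φinf) (hΓinf : 0 < Γinf)
    (hkd : 0 < kd) (hlam : 0 < lam)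
    (hlameq : lam = Real.exp ((μb - μs) / (R * T)))
    (hkad : kad = lam * kd)
    (f g : ℝ → ℝ)
    (hf : ∀ Φ, f Φ = μb * Φ + R * T * Φinf * ((Φ / Φinf) * Real.log (Φ / Φinf) - Φ / Φinf))
    (hg : ∀ Γ, g Γ = γ0 + μs * Γ + R * T * Γinf *
      ((Γ / Γinf) * Real.log (Γ / Γinf) + (1 - Γ / Γinf) * Real.log (1 - Γ / Γinf)))
    (S : ℝ → ℝ → ℝ)
    (hS : ∀ Φ Γ, S Φ Γ = kad * (Φ / Φinf) * (1 - Γ / Γinf) - kd * (Γ / Γinf)) :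
    ∀ Φ ∈ Set.Ioo (0 : ℝ) Φinf, ∀ Γ ∈ Set.Ioo (0 : ℝ) Γinf,
      (deriv g Γ - deriv f Φ) * S Φ Γ ≤ 0 :=
  statement5_general μb μs γ0 R T Φinf Γinf kd lam kad hR hT hΦinf hΓinf hkd hlameq hkad f g hf hg S
    hS
end

section
/- Let θ_Y ∈ (π/2, π) (hydrophobic substrate) and E > 0. If 0 ≤ Γ₁ < Γ₂ < 1 and γ(Γᵢ) = 1 + E ln(1 - Γᵢ) > 0 with γ(Γᵢ) ≥ |cos θ_Y| for i = 1, 2, then the equilibrium contact angles θ_e(Γᵢ) = arccos(cos θ_Y / γ(Γᵢ)) satisfy θ_e(Γ₂) ≥ θ_e(Γ₁) ≥ θ_Y, i.e., surfactants make the droplet more hydrophobic. -/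
/-!
The surface tension `γ(Γ) = 1 + E ln(1 - Γ)` decreases in `Γ` from `γ(0) = 1`, while
`cos θ_Y < 0`. Dividing a negative number by a smaller positive one makes it smaller, and
`arccos` is antitone, so `θ_e = arccos (cos θ_Y / γ)` grows as `γ` falls. The comparison
`θ_Y ≤ θ_e(Γ₁)` is the case `Γ = 0` against `Γ₁`, since `θ_Y = arccos (cos θ_Y / γ(0))`.
-/

open Real

noncomputable def langmuirTension (E Γ : ℝ) : ℝ := 1 + E * log (1 - Γ)

lemma langmuirTension_zero (E : ℝ) : langmuirTension E 0 = 1 := by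
  simp [langmuirTension]

lemma langmuirTension_antitoneOn {E : ℝ} (hE : 0 ≤ E) :
    AntitoneOn (langmuirTension E) (Set.Iio 1) := by
  intro Γ₁ _ Γ₂ hΓ₂ h12
  unfold langmuirTension
  gcongr
  exact sub_pos.2 hΓ₂

lemma arccos_div_le_arccos_div_of_nonpos {c a b : ℝ} (hc : c ≤ 0) (ha : 0 < a) (hab : a ≤ b) :
    arccos (c / b) ≤ arccos (c / a) := by
  refine arccos_le_arccos ?_
  rw [← neg_le_neg_iff, ← neg_div, ← neg_div]
  exact div_le_div_of_nonneg_left (neg_nonneg.2 hc) ha hab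

theorem statement17_general (E θY : ℝ) (hE : 0 < E) (hθY : θY ∈ Set.Ioo (Real.pi / 2) Real.pi)
    (Γ₁ Γ₂ : ℝ) (h0 : 0 ≤ Γ₁) (h12 : Γ₁ < Γ₂) (h2 : Γ₂ < 1)
    (hpos2 : 0 < 1 + E * Real.log (1 - Γ₂)) :
    θY ≤ Real.arccos (Real.cos θY / (1 + E * Real.log (1 - Γ₁))) ∧
    Real.arccos (Real.cos θY / (1 + E * Real.log (1 - Γ₁))) ≤
      Real.arccos (Real.cos θY / (1 + E * Real.log (1 - Γ₂))) := by
  obtain ⟨hθ_gt, hθ_lt⟩ := hθY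
  have hcos : cos θY ≤ 0 := cos_nonpos_of_pi_div_two_le_of_le hθ_gt.le (by linarith)
  have hγ : langmuirTension E Γ₂ ≤ langmuirTension E Γ₁ :=
    langmuirTension_antitoneOn hE.le (h12.trans h2) h2 h12.le
  have hγ₁ : langmuirTension E Γ₁ ≤ 1 := by
    simpa [langmuirTension_zero] using
      langmuirTension_antitoneOn hE.le (by norm_num) (h12.trans h2) h0
  constructor
  · calc θY = arccos (cos θY / 1) := by
          rw [div_one, arccos_cos (by linarith [pi_pos]) hθ_lt.le]
      _ ≤ _ := arccos_div_le_arccos_div_of_nonpos hcos (hpos2.trans_le hγ) hγ₁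
  · exact arccos_div_le_arccos_div_of_nonpos hcos hpos2 hγ

theorem statement17 (E θY : ℝ) (hE : 0 < E) (hθY : θY ∈ Set.Ioo (Real.pi / 2) Real.pi)
    (Γ₁ Γ₂ : ℝ) (h0 : 0 ≤ Γ₁) (h12 : Γ₁ < Γ₂) (h2 : Γ₂ < 1)
    (hpos1 : 0 < 1 + E * Real.log (1 - Γ₁)) (hpos2 : 0 < 1 + E * Real.log (1 - Γ₂))
    (hge1 : |Real.cos θY| ≤ 1 + E * Real.log (1 - Γ₁))
    (hge2 : |Real.cos θY| ≤ 1 + E * Real.log (1 - Γ₂)) :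
    θY ≤ Real.arccos (Real.cos θY / (1 + E * Real.log (1 - Γ₁))) ∧
    Real.arccos (Real.cos θY / (1 + E * Real.log (1 - Γ₁))) ≤
      Real.arccos (Real.cos θY / (1 + E * Real.log (1 - Γ₂))) :=
  statement17_general E θY hE hθY Γ₁ Γ₂ h0 h12 h2 hpos2
end
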